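/- arXiv:1907.09644 — 2 statements merged into one kernel-verified Lean document; each statement's English description precedes it below -/
import Mathlib

section
/- Wei duality for demimatroids: if M = (E, ρ) is a demimatroid with n = |E| and k = ρ(E), then {d_1(M), …, d_k(M)} and {n+1−d_1(M*), …, n+1−d_{n−k}(M*)} are disjoint subsets whose union is {1, …, n}. -/
/-!
Let `g(m)` be the largest rank of an `m`-subset of `E`. A set of rank `r` contains sets of every
smaller rank, so `d_r ≤ m ↔ r ≤ g(m)`; hence the Wei numbers `d_1 < ⋯ < d_k` are exactly the
`m ∈ [1, n]` at which `g` jumps. Complementation gives `g*(m) = m + g(n - m) - ρ(E)`, so `g*` jumps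
at `m` if and only if `g` does not jump at `n + 1 - m`, and the two sets of the theorem are the
jumps and the non-jumps of `g` in `[1, n]`.
-/

open Finset

/-- A demimatroid on ground set `E`. -/
def IsDemimatroid {α : Type*} [DecidableEq α] (E : Finset α) (ρ : Finset α → ℤ) : Prop :=
  ρ ∅ = 0 ∧ (∀ X ⊆ E, 0 ≤ ρ X) ∧
    ∀ X ⊆ E, ∀ x ∈ E, ρ X ≤ ρ (insert x X) ∧ ρ (insert x X) ≤ ρ X + 1
/-- The `r`-th Wei number `d_r(M) = min { |X| : X ⊆ E, ρ(X) = r }`. -/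
noncomputable def weiNumber {α : Type*} [DecidableEq α] (E : Finset α) (ρ : Finset α → ℤ)
    (r : ℤ) : ℕ :=
  sInf {m : ℕ | ∃ X ⊆ E, ρ X = r ∧ X.card = m}
/-- The dual rank function `ρ*(X) = |X| + ρ(E \ X) - ρ(E)`. -/
def dualFn {α : Type*} [DecidableEq α] (E : Finset α) (ρ : Finset α → ℤ) : Finset α → ℤ :=
  fun X => X.card + ρ (E \ X) - ρ E

section

variable {α : Type*}

-- `toNat` makes the empty supremum (`m > |E|`) equal to `0` and loses nothing on a demimatroid.
noncomputable def maxRank (E : Finset α) (ρ : Finset α → ℤ) (m : ℕ) : ℤ :=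
  ((E.powersetCard m).sup fun X => (ρ X).toNat : ℕ)

def IsJump (E : Finset α) (ρ : Finset α → ℤ) (m : ℕ) : Prop :=
  maxRank E ρ (m - 1) < maxRank E ρ m

lemma maxRank_nonneg (E : Finset α) (ρ : Finset α → ℤ) (m : ℕ) : 0 ≤ maxRank E ρ m :=
  Int.natCast_nonneg _

lemma rank_le_maxRank {E X : Finset α} (ρ : Finset α → ℤ) (hX : X ⊆ E) :
    ρ X ≤ maxRank E ρ X.card :=
  (Int.self_le_toNat _).trans <| Int.ofNat_le.mpr <|
    le_sup (f := fun X => (ρ X).toNat) (mem_powersetCard.mpr ⟨hX, rfl⟩)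

namespace IsDemimatroid

variable [DecidableEq α] {E : Finset α} {ρ : Finset α → ℤ}

lemma rank_le_rank_union (h : IsDemimatroid E ρ) {X S : Finset α} (hX : X ⊆ E) (hS : S ⊆ E) :
    ρ X ≤ ρ (X ∪ S) := by
  induction S using Finset.induction_on with
  | empty => simp
  | @insert a S _ ih =>
    have hSE : S ⊆ E := (subset_insert a S).trans hS
    rw [union_insert]
    exact (ih hSE).trans (h.2.2 _ (union_subset hX hSE) a (hS (mem_insert_self a S))).1

lemma rank_union_le (h : IsDemimatroid E ρ) {X S : Finset α} (hX : X ⊆ E) (hS : S ⊆ E) :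
    ρ (X ∪ S) ≤ ρ X + S.card := by
  induction S using Finset.induction_on with
  | empty => simp
  | @insert a S ha ih =>
    have hSE : S ⊆ E := (subset_insert a S).trans hS
    have := (h.2.2 _ (union_subset hX hSE) a (hS (mem_insert_self a S))).2
    rw [union_insert, card_insert_of_notMem ha]
    push_cast
    linarith [ih hSE]

lemma rank_mono (h : IsDemimatroid E ρ) {X Y : Finset α} (hXY : X ⊆ Y) (hY : Y ⊆ E) :
    ρ X ≤ ρ Y := by
  simpa [union_eq_right.mpr hXY] using h.rank_le_rank_union (hXY.trans hY) hY

lemma exists_subset_rank_eq (h : IsDemimatroid E ρ) {X : Finset α} (hX : X ⊆ E) {r : ℤ}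
    (hr : 0 ≤ r) (hrX : r ≤ ρ X) : ∃ Y ⊆ X, ρ Y = r := by
  induction X using Finset.induction_on generalizing r with
  | empty => exact ⟨∅, subset_refl _, by rw [h.1] at hrX ⊢; omega⟩
  | @insert a X _ ih =>
    have hXE : X ⊆ E := (subset_insert a X).trans hX
    have hstep := (h.2.2 X hXE a (hX (mem_insert_self a X))).2
    rcases eq_or_lt_of_le hrX with hr' | hr'
    · exact ⟨insert a X, subset_refl _, hr'.symm⟩
    · obtain ⟨Y, hYX, hY⟩ := ih hXE hr (by omega)
      exact ⟨Y, hYX.trans (subset_insert a X), hY⟩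

lemma exists_rank_eq_maxRank (h : IsDemimatroid E ρ) {m : ℕ} (hm : m ≤ E.card) :
    ∃ X ⊆ E, X.card = m ∧ ρ X = maxRank E ρ m := by
  obtain ⟨X, hXmem, hXsup⟩ :=
    exists_mem_eq_sup _ (powersetCard_nonempty.mpr hm) fun X => (ρ X).toNat
  obtain ⟨hX, hXc⟩ := mem_powersetCard.mp hXmem
  exact ⟨X, hX, hXc, by rw [maxRank, hXsup, Int.toNat_of_nonneg (h.2.1 X hX)]⟩

lemma maxRank_mono (h : IsDemimatroid E ρ) {m m' : ℕ} (hmm' : m ≤ m') (hm' : m' ≤ E.card) :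
    maxRank E ρ m ≤ maxRank E ρ m' := by
  obtain ⟨X, hX, hXc, hXmax⟩ := h.exists_rank_eq_maxRank (hmm'.trans hm')
  obtain ⟨Y, hXY, hYE, hYc⟩ := exists_subsuperset_card_eq hX (hXc ▸ hmm') hm'
  calc maxRank E ρ m = ρ X := hXmax.symm
    _ ≤ ρ Y := h.rank_mono hXY hYE
    _ ≤ maxRank E ρ m' := hYc ▸ rank_le_maxRank ρ hYE

lemma maxRank_zero (h : IsDemimatroid E ρ) : maxRank E ρ 0 = 0 := by
  simp [maxRank, h.1]

lemma maxRank_le_rank_ground (h : IsDemimatroid E ρ) {m : ℕ} (hm : m ≤ E.card) :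
    maxRank E ρ m ≤ ρ E := by
  obtain ⟨X, hX, -, hXmax⟩ := h.exists_rank_eq_maxRank hm
  exact hXmax ▸ h.rank_mono hX (subset_refl E)

lemma exists_rank_eq_card_le_iff (h : IsDemimatroid E ρ) {r : ℤ} (hr : 0 ≤ r) {m : ℕ}
    (hm : m ≤ E.card) : (∃ X ⊆ E, ρ X = r ∧ X.card ≤ m) ↔ r ≤ maxRank E ρ m := by
  constructor
  · rintro ⟨X, hX, rfl, hXm⟩
    exact (rank_le_maxRank ρ hX).trans (h.maxRank_mono hXm hm)
  · intro hrm
    obtain ⟨Z, hZ, hZc, hZmax⟩ := h.exists_rank_eq_maxRank hm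
    obtain ⟨Y, hYZ, hY⟩ := h.exists_subset_rank_eq hZ hr (hZmax ▸ hrm)
    exact ⟨Y, hYZ.trans hZ, hY, hZc ▸ card_le_card hYZ⟩

lemma weiNumber_le_iff (h : IsDemimatroid E ρ) {r : ℤ} (hr : 0 ≤ r) (hrE : r ≤ ρ E) {m : ℕ}
    (hm : m ≤ E.card) : weiNumber E ρ r ≤ m ↔ r ≤ maxRank E ρ m := by
  set S := {m : ℕ | ∃ X ⊆ E, ρ X = r ∧ X.card = m}
  rw [weiNumber, ← h.exists_rank_eq_card_le_iff hr hm]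
  constructor
  · intro hwm
    obtain ⟨X, hX, hXr, -⟩ := (h.exists_rank_eq_card_le_iff hr le_rfl).mpr
      (hrE.trans (rank_le_maxRank ρ (subset_refl E)))
    obtain ⟨Y, hY, hYr, hYc⟩ := Nat.sInf_mem (s := S) ⟨X.card, X, hX, hXr, rfl⟩
    exact ⟨Y, hY, hYr, hYc ▸ hwm⟩
  · rintro ⟨X, hX, hXr, hXm⟩
    exact (Nat.sInf_le (s := S) ⟨X, hX, hXr, rfl⟩).trans hXm

lemma exists_weiNumber_eq_iff (h : IsDemimatroid E ρ) {m : ℕ} :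
    (∃ r, 1 ≤ r ∧ r ≤ ρ E ∧ weiNumber E ρ r = m) ↔ 1 ≤ m ∧ m ≤ E.card ∧ IsJump E ρ m := by
  constructor
  · rintro ⟨r, hr1, hrE, rfl⟩
    have hle_iff := fun k (hk : k ≤ E.card) => h.weiNumber_le_iff (by omega) hrE hk
    have hle_card : weiNumber E ρ r ≤ E.card :=
      (hle_iff _ le_rfl).mpr (hrE.trans (rank_le_maxRank ρ (subset_refl E)))
    have hpos : 1 ≤ weiNumber E ρ r := by
      by_contra! hw
      have := (hle_iff 0 (Nat.zero_le _)).mp (by omega)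
      rw [h.maxRank_zero] at this
      omega
    have hlt : maxRank E ρ (weiNumber E ρ r - 1) < r :=
      lt_of_not_ge fun hr => by have := (hle_iff _ (by omega)).mpr hr; omega
    exact ⟨hpos, hle_card, hlt.trans_le ((hle_iff _ hle_card).mp le_rfl)⟩
  · rintro ⟨hm1, hmn, hjump⟩
    have hpos : 0 < maxRank E ρ m := (maxRank_nonneg E ρ (m - 1)).trans_lt hjump
    have hle_iff := fun k (hk : k ≤ E.card) =>
      h.weiNumber_le_iff hpos.le (h.maxRank_le_rank_ground hmn) hk
    refine ⟨maxRank E ρ m, hpos,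
      h.maxRank_le_rank_ground hmn, le_antisymm ((hle_iff m hmn).mpr le_rfl) ?_⟩
    by_contra! hw
    have := (hle_iff (m - 1) (by omega)).mp (by omega)
    exact not_lt.mpr this hjump

lemma dualFn_ground (h : IsDemimatroid E ρ) : dualFn E ρ E = E.card - ρ E := by
  simp [dualFn, h.1]

lemma dualFn_isDemimatroid (h : IsDemimatroid E ρ) : IsDemimatroid E (dualFn E ρ) := by
  refine ⟨by simp [dualFn], fun X hX => ?_, fun X hX x hx => ?_⟩
  · have := h.rank_union_le (sdiff_subset : E \ X ⊆ E) hX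
    rw [sdiff_union_of_subset hX] at this
    simp only [dualFn]
    linarith
  · by_cases hxX : x ∈ X
    · rw [insert_eq_of_mem hxX]
      omega
    have hstep := h.2.2 ((E \ X).erase x) ((erase_subset x _).trans sdiff_subset) x hx
    rw [insert_erase (mem_sdiff.mpr ⟨hx, hxX⟩)] at hstep
    simp only [dualFn, sdiff_insert, card_insert_of_notMem hxX]
    push_cast
    constructor <;> linarith [hstep.1, hstep.2]

-- Complementation `X ↦ E \ X` matches `m`-subsets with `(n - m)`-subsets.
lemma maxRank_dualFn (h : IsDemimatroid E ρ) {m : ℕ} (hm : m ≤ E.card) :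
    maxRank E (dualFn E ρ) m = m + maxRank E ρ (E.card - m) - ρ E := by
  apply le_antisymm
  · obtain ⟨X, hX, hXc, hXmax⟩ := h.dualFn_isDemimatroid.exists_rank_eq_maxRank hm
    have := rank_le_maxRank ρ (sdiff_subset : E \ X ⊆ E)
    rw [card_sdiff_of_subset hX, hXc] at this
    rw [← hXmax, dualFn, hXc]
    linarith
  · obtain ⟨Y, hY, hYc, hYmax⟩ := h.exists_rank_eq_maxRank (Nat.sub_le E.card m)
    have := rank_le_maxRank (dualFn E ρ) (sdiff_subset : E \ Y ⊆ E)
    have hcard : (E \ Y).card = m := by rw [card_sdiff_of_subset hY, hYc]; omega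
    rw [hcard, dualFn, Finset.sdiff_sdiff_eq_self hY, hcard, hYmax] at this
    exact this

lemma isJump_dualFn_iff (h : IsDemimatroid E ρ) {m : ℕ} (hm1 : 1 ≤ m) (hmn : m ≤ E.card) :
    IsJump E (dualFn E ρ) m ↔ ¬ IsJump E ρ (E.card + 1 - m) := by
  have hmono := h.maxRank_mono (Nat.le_succ (E.card - m)) (by omega)
  rw [IsJump, IsJump, h.maxRank_dualFn hmn, h.maxRank_dualFn (by omega),
    show E.card - (m - 1) = E.card - m + 1 by omega, show E.card + 1 - m = E.card - m + 1 by omega,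
    Nat.add_sub_cancel, Nat.cast_sub hm1, not_lt]
  push_cast
  constructor <;> intro <;> linarith

lemma exists_weiNumber_eq_int_iff (h : IsDemimatroid E ρ) (m : ℤ) :
    (∃ r : ℤ, 1 ≤ r ∧ r ≤ ρ E ∧ m = (weiNumber E ρ r : ℤ)) ↔
      1 ≤ m ∧ m ≤ E.card ∧ IsJump E ρ m.toNat := by
  constructor
  · rintro ⟨r, hr1, hrE, rfl⟩
    obtain ⟨hw1, hwn, hj⟩ := h.exists_weiNumber_eq_iff.mp ⟨r, hr1, hrE, rfl⟩
    exact ⟨by omega, by omega, by rwa [Int.toNat_natCast]⟩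
  · rintro ⟨hm1, hmn, hj⟩
    obtain ⟨r, hr1, hrE, hw⟩ := h.exists_weiNumber_eq_iff.mpr ⟨by omega, by omega, hj⟩
    exact ⟨r, hr1, hrE, by omega⟩

lemma exists_dual_weiNumber_eq_int_iff (h : IsDemimatroid E ρ) (m : ℤ) :
    (∃ r : ℤ, 1 ≤ r ∧ r ≤ (E.card : ℤ) - ρ E ∧
        m = (E.card : ℤ) + 1 - (weiNumber E (dualFn E ρ) r : ℤ)) ↔
      1 ≤ m ∧ m ≤ E.card ∧ ¬ IsJump E ρ m.toNat := by
  have hd := h.dualFn_isDemimatroid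
  constructor
  · rintro ⟨r, hr1, hrE, rfl⟩
    obtain ⟨hw1, hwn, hj⟩ := hd.exists_weiNumber_eq_iff.mp ⟨r, hr1, h.dualFn_ground ▸ hrE, rfl⟩
    rw [h.isJump_dualFn_iff hw1 hwn] at hj
    refine ⟨by omega, by omega, ?_⟩
    convert hj using 2
    omega
  · rintro ⟨hm1, hmn, hj⟩
    have hreflect : E.card + 1 - (E.card + 1 - m.toNat) = m.toNat := by omega
    obtain ⟨r, hr1, hrE, hw⟩ := hd.exists_weiNumber_eq_iff.mpr
      ⟨by omega, by omega, (h.isJump_dualFn_iff (by omega) (by omega)).mpr (hreflect ▸ hj)⟩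
    exact ⟨r, hr1, h.dualFn_ground ▸ hrE, by omega⟩

end IsDemimatroid

end

theorem wei_duality {α : Type*} [DecidableEq α]
    (E : Finset α) (ρ : Finset α → ℤ) (h : IsDemimatroid E ρ) :
    Disjoint {m : ℤ | ∃ r : ℤ, 1 ≤ r ∧ r ≤ ρ E ∧ m = (weiNumber E ρ r : ℤ)}
      {m : ℤ | ∃ r : ℤ, 1 ≤ r ∧ r ≤ (E.card : ℤ) - ρ E ∧
        m = (E.card : ℤ) + 1 - (weiNumber E (dualFn E ρ) r : ℤ)} ∧
    {m : ℤ | ∃ r : ℤ, 1 ≤ r ∧ r ≤ ρ E ∧ m = (weiNumber E ρ r : ℤ)} ∪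
      {m : ℤ | ∃ r : ℤ, 1 ≤ r ∧ r ≤ (E.card : ℤ) - ρ E ∧
        m = (E.card : ℤ) + 1 - (weiNumber E (dualFn E ρ) r : ℤ)} =
      Set.Icc 1 (E.card : ℤ) := by
  refine ⟨Set.disjoint_left.mpr fun m hm hm' => ?_, Set.ext fun m => ?_⟩
  · exact ((h.exists_dual_weiNumber_eq_int_iff m).mp hm').2.2
      ((h.exists_weiNumber_eq_int_iff m).mp hm).2.2
  · simp only [Set.mem_union, Set.mem_ofPred_eq, h.exists_weiNumber_eq_int_iff,
      h.exists_dual_weiNumber_eq_int_iff, Set.mem_Icc]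
    tauto
end

section
/- For a nontrivial demimatroid M of rank k, the upper Wei numbers satisfy 0 ≤ d^0(M) < d^1(M) < ⋯ < d^k(M) = |E|, and if ρ(X) ≤ r then |X| ≤ d^r(M). -/
open Finset

/-- The `r`-th upper Wei number `d^r(M) = max { |X| : X ⊆ E, ρ(X) = r }`. -/
noncomputable def upperWeiNumber {α : Type*} [DecidableEq α] (E : Finset α) (ρ : Finset α → ℤ)
    (r : ℤ) : ℕ :=
  sSup {m : ℕ | ∃ X ⊆ E, ρ X = r ∧ X.card = m}

/-! Since adding an element raises the rank by at most one, every rank between `ρ X` and `ρ E`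
is attained by a set between `X` and `E`. A largest set of rank `r < ρ E` is a proper subset of
`E`, and adding any further element must raise its rank, to `r + 1`; hence `d^r < d^(r+1)`. -/

section

variable {α : Type*} {E : Finset α} {ρ : Finset α → ℤ}

lemma bddAbove_card_of_rank_eq (r : ℤ) :
    BddAbove {m : ℕ | ∃ X ⊆ E, ρ X = r ∧ X.card = m} :=
  ⟨E.card, by rintro _ ⟨X, hXE, -, rfl⟩; exact card_le_card hXE⟩

variable [DecidableEq α]

lemma card_le_upperWeiNumber {X : Finset α} (hXE : X ⊆ E) :
    X.card ≤ upperWeiNumber E ρ (ρ X) :=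
  le_csSup (bddAbove_card_of_rank_eq _) ⟨X, hXE, rfl, rfl⟩

lemma upperWeiNumber_le_card (r : ℤ) : upperWeiNumber E ρ r ≤ E.card :=
  csSup_le' <| by rintro _ ⟨X, hXE, -, rfl⟩; exact card_le_card hXE

lemma exists_card_eq_upperWeiNumber {r : ℤ} (h : ∃ X ⊆ E, ρ X = r) :
    ∃ X ⊆ E, ρ X = r ∧ X.card = upperWeiNumber E ρ r := by
  obtain ⟨X, hXE, hX⟩ := h
  have hne : {m : ℕ | ∃ X ⊆ E, ρ X = r ∧ X.card = m}.Nonempty := ⟨X.card, X, hXE, hX, rfl⟩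
  exact Nat.sSup_mem hne (bddAbove_card_of_rank_eq r)

namespace IsDemimatroid

variable {X : Finset α} {r : ℤ}

lemma rank_le_insert (h : IsDemimatroid E ρ) (hXE : X ⊆ E) {x : α} (hx : x ∈ E) :
    ρ X ≤ ρ (insert x X) :=
  (h.2.2 X hXE x hx).1

lemma rank_insert_le (h : IsDemimatroid E ρ) (hXE : X ⊆ E) {x : α} (hx : x ∈ E) :
    ρ (insert x X) ≤ ρ X + 1 :=
  (h.2.2 X hXE x hx).2

lemma exists_rank_eq_of_le_rank_union (h : IsDemimatroid E ρ) (hXE : X ⊆ E) (hXr : ρ X ≤ r) :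
    ∀ D ⊆ E, r ≤ ρ (X ∪ D) → ∃ Z, X ⊆ Z ∧ Z ⊆ X ∪ D ∧ ρ Z = r := by
  intro D
  induction D using Finset.induction_on with
  | empty => exact fun _ hr ↦ ⟨X, subset_rfl, subset_union_left, by simp_all [le_antisymm_iff]⟩
  | insert a D _ ih =>
    intro hDE hr
    have hDE' : D ⊆ E := (subset_insert a D).trans hDE
    rw [union_insert] at hr ⊢
    by_cases hrD : r ≤ ρ (X ∪ D)
    · obtain ⟨Z, hXZ, hZ, hZr⟩ := ih hDE' hrD
      exact ⟨Z, hXZ, hZ.trans (subset_insert _ _), hZr⟩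
    · have := h.rank_insert_le (union_subset hXE hDE') (hDE (mem_insert_self a D))
      exact ⟨_, subset_union_left.trans (subset_insert _ _), subset_rfl, by omega⟩

lemma exists_superset_rank_eq (h : IsDemimatroid E ρ) (hXE : X ⊆ E) (hXr : ρ X ≤ r)
    (hrE : r ≤ ρ E) : ∃ Z, X ⊆ Z ∧ Z ⊆ E ∧ ρ Z = r := by
  obtain ⟨Z, hXZ, hZ, hZr⟩ :=
    h.exists_rank_eq_of_le_rank_union hXE hXr E subset_rfl (by rwa [union_eq_right.2 hXE])
  exact ⟨Z, hXZ, union_eq_right.2 hXE ▸ hZ, hZr⟩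

lemma card_le_upperWeiNumber_of_rank_le (h : IsDemimatroid E ρ) (hXE : X ⊆ E) (hXr : ρ X ≤ r)
    (hrE : r ≤ ρ E) : X.card ≤ upperWeiNumber E ρ r := by
  obtain ⟨Z, hXZ, hZE, rfl⟩ := h.exists_superset_rank_eq hXE hXr hrE
  exact (card_le_card hXZ).trans (card_le_upperWeiNumber hZE)

lemma upperWeiNumber_lt_succ (h : IsDemimatroid E ρ) (hr : 0 ≤ r) (hrE : r < ρ E) :
    upperWeiNumber E ρ r < upperWeiNumber E ρ (r + 1) := by
  obtain ⟨Z, -, hZE, hZr⟩ := h.exists_superset_rank_eq (empty_subset E) (h.1 ▸ hr) hrE.le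
  obtain ⟨X, hXE, rfl, hX⟩ := exists_card_eq_upperWeiNumber ⟨Z, hZE, hZr⟩
  obtain ⟨x, hxE, hxX⟩ : ∃ x ∈ E, x ∉ X :=
    not_subset.1 fun hEX ↦ hrE.ne (congrArg ρ (subset_antisymm hXE hEX))
  have hxXE : insert x X ⊆ E := insert_subset hxE hXE
  have hcard : (insert x X).card = X.card + 1 := card_insert_of_notMem hxX
  have hrank : ρ (insert x X) = ρ X + 1 := by
    have hmax : (insert x X).card ≤ upperWeiNumber E ρ (ρ (insert x X)) :=
      card_le_upperWeiNumber hxXE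
    have := h.rank_le_insert hXE hxE
    have := h.rank_insert_le hXE hxE
    by_contra hne
    rw [show ρ (insert x X) = ρ X by omega] at hmax
    omega
  calc upperWeiNumber E ρ (ρ X) < (insert x X).card := by omega
    _ ≤ upperWeiNumber E ρ (ρ (insert x X)) := card_le_upperWeiNumber hxXE
    _ = upperWeiNumber E ρ (ρ X + 1) := by rw [hrank]

end IsDemimatroid

end

theorem upper_wei_chain_general {α : Type*} [DecidableEq α]
    (E : Finset α) (ρ : Finset α → ℤ) (h : IsDemimatroid E ρ) :
    (∀ r : ℤ, 0 ≤ r → r < ρ E → upperWeiNumber E ρ r < upperWeiNumber E ρ (r + 1)) ∧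
    upperWeiNumber E ρ (ρ E) = E.card ∧
    (∀ X ⊆ E, ∀ r : ℤ, 0 ≤ r → r ≤ ρ E → ρ X ≤ r → (X.card : ℤ) ≤ upperWeiNumber E ρ r) :=
  ⟨fun _ hr hrE ↦ h.upperWeiNumber_lt_succ hr hrE,
    (upperWeiNumber_le_card _).antisymm (card_le_upperWeiNumber subset_rfl),
    fun _ hXE _ _ hrE hXr ↦ by exact_mod_cast h.card_le_upperWeiNumber_of_rank_le hXE hXr hrE⟩

theorem upper_wei_chain {α : Type*} [DecidableEq α]
    (E : Finset α) (ρ : Finset α → ℤ) (h : IsDemimatroid E ρ) (hnt : 1 ≤ ρ E) :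
    (∀ r : ℤ, 0 ≤ r → r < ρ E → upperWeiNumber E ρ r < upperWeiNumber E ρ (r + 1)) ∧
    upperWeiNumber E ρ (ρ E) = E.card ∧
    (∀ X ⊆ E, ∀ r : ℤ, 0 ≤ r → r ≤ ρ E → ρ X ≤ r → (X.card : ℤ) ≤ upperWeiNumber E ρ r) :=
  upper_wei_chain_general E ρ h
end
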